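/- arXiv:2412.02223 — 2 statements merged into one kernel-verified Lean document; each statement's English description precedes it below -/
import Mathlib

section
/- Let n ∈ ℕ, let E be a Dedekind complete vector lattice, let E_0 be a vector sublattice of E that is itself Dedekind complete, and let f_1,…,f_n ∈ E_0. If φ: ℝ^n → ℝ is a sublinear map, then the supremum of the set { Σ_{i=1}^n a_i f_i : a ∈ ∂φ(0) } computed in E_0 equals the supremum of the same set computed in E. -/
open scoped BigOperators

/-- A sublinear map on ℝⁿ. -/
def Sublinear {n : ℕ} (φ : EuclideanSpace ℝ (Fin n) → ℝ) : Prop :=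
  (∀ x y, φ (x + y) ≤ φ x + φ y) ∧ ∀ c : ℝ, 0 ≤ c → ∀ x, φ (c • x) = c * φ x

/-- The subdifferential of a sublinear map φ at 0. -/
def subdiff {n : ℕ} (φ : EuclideanSpace ℝ (Fin n) → ℝ) :
    Set (EuclideanSpace ℝ (Fin n)) :=
  {a | ∀ x, ∑ i, a i * x i ≤ φ x}

/-- `s` is the supremum of `S` computed in the sublattice `E₀` (with its induced
order): `s ∈ E₀`, `s` is an upper bound of `S`, and `s` is least among the upper
bounds of `S` belonging to `E₀`. -/
def IsLUBIn {E : Type*} [Preorder E] (E₀ : Set E) (S : Set E) (s : E) : Prop :=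
  s ∈ E₀ ∧ s ∈ upperBounds S ∧ ∀ b ∈ E₀, b ∈ upperBounds S → s ≤ b

set_option linter.unusedSectionVars false
section aux
variable {E : Type*} [Lattice E] [AddCommGroup E] [Module ℝ E]
    [CovariantClass E E (· + ·) (· ≤ ·)] [PosSMulMono ℝ E]

lemma aux_smul_nonneg {c : ℝ} {v : E} (hc : 0 ≤ c) (hv : 0 ≤ v) : 0 ≤ c • v := by
  simpa using smul_le_smul_of_nonneg_left hv hc

lemma aux_smul_le {c d : ℝ} {v w : E} (hv : v ≤ w) (hnv : -v ≤ w) (h0w : 0 ≤ w)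
    (hcd : |c| ≤ d) : c • v ≤ d • w := by
  have step1 : c • v ≤ |c| • w := by
    rcases le_or_gt 0 c with hc | hc
    · rw [abs_of_nonneg hc]; exact smul_le_smul_of_nonneg_left hv hc
    · have h1 : c • v = (-c) • (-v) := by rw [neg_smul, smul_neg, neg_neg]
      rw [h1, abs_of_neg hc]
      exact smul_le_smul_of_nonneg_left hnv (by linarith)
  have step2 : |c| • w ≤ d • w := by
    have h : 0 ≤ d • w - |c| • w := by
      rw [← sub_smul]; exact aux_smul_nonneg (sub_nonneg.2 hcd) h0w
    exact sub_nonneg.mp h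
  exact step1.trans step2


lemma aux_sum_le {ι : Type*} (s : Finset ι) (f g : ι → E) (h : ∀ i ∈ s, f i ≤ g i) :
    ∑ i ∈ s, f i ≤ ∑ i ∈ s, g i := by
  classical
  induction s using Finset.induction_on with
  | empty => simp
  | insert a s hx ih =>
    rw [Finset.sum_insert hx, Finset.sum_insert hx]
    exact add_le_add (h a (Finset.mem_insert_self a s))
      (ih fun i hi => h i (Finset.mem_insert_of_mem hi))

lemma aux_sum_nonneg {ι : Type*} (s : Finset ι) (f : ι → E) (h : ∀ i ∈ s, 0 ≤ f i) :
    0 ≤ ∑ i ∈ s, f i := by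
  have := aux_sum_le s (fun _ => (0:E)) f h
  simpa using this

lemma aux_arch (hDC : ∀ S : Set E, S.Nonempty → BddAbove S → ∃ s, IsLUB S s)
    {w h : E} (H : ∀ ε : ℝ, 0 < ε → w ≤ ε • h) : w ≤ 0 := by
  have key : ∀ m : ℕ, ((m : ℝ) + 1) • w ≤ h := by
    intro m
    have hε : (0:ℝ) < 1/((m:ℝ)+1) := by positivity
    have h1 := smul_le_smul_of_nonneg_left (H _ hε) (by positivity : (0:ℝ) ≤ (m:ℝ)+1)
    rw [smul_smul] at h1
    have h2 : ((m:ℝ)+1) * (1/((m:ℝ)+1)) = 1 := by field_simp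
    rwa [h2, one_smul] at h1
  set T : Set E := {x | ∃ m : ℕ, x = ((m : ℝ) + 1) • w} with hT
  obtain ⟨t, ht⟩ := hDC T ⟨(1:ℝ) • w, 0, by norm_num⟩ ⟨h, by rintro x ⟨m, rfl⟩; exact key m⟩
  have hub : t - w ∈ upperBounds T := by
    rintro x ⟨m, rfl⟩
    have h1 : (((m+1 : ℕ) : ℝ) + 1) • w ∈ T := ⟨m+1, rfl⟩
    have h2 := ht.1 h1
    have h3 : (((m+1 : ℕ) : ℝ) + 1) • w = ((m:ℝ)+1) • w + w := by
      push_cast; rw [add_smul, one_smul]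
    rw [h3] at h2
    exact le_sub_iff_add_le.mpr h2
  have h4 := sub_nonneg.mpr (ht.2 hub)
  simpa using h4

end aux

lemma glin {n : ℕ} (g : EuclideanSpace ℝ (Fin n) →ₗ[ℝ] ℝ) (x : EuclideanSpace ℝ (Fin n)) :
    g x = ∑ i, x i * g (EuclideanSpace.single i 1) := by
  have hx : ∑ i, x i • (EuclideanSpace.single i (1:ℝ) : EuclideanSpace ℝ (Fin n)) = x := by
    have h := (EuclideanSpace.basisFun (Fin n) ℝ).toBasis.sum_repr x
    simpa [OrthonormalBasis.coe_toBasis_repr_apply, OrthonormalBasis.coe_toBasis,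
      EuclideanSpace.basisFun_repr, EuclideanSpace.basisFun_apply] using h
  conv_lhs => rw [← hx]
  rw [map_sum]
  simp [smul_eq_mul]

lemma sum_single {n : ℕ} (a : EuclideanSpace ℝ (Fin n)) (i : Fin n) :
    ∑ j, a j * (EuclideanSpace.single i (1:ℝ) : EuclideanSpace ℝ (Fin n)) j = a i := by
  simp [EuclideanSpace.single_apply]

lemma sum_single_neg {n : ℕ} (a : EuclideanSpace ℝ (Fin n)) (i : Fin n) :
    ∑ j, a j * (-(EuclideanSpace.single i (1:ℝ)) : EuclideanSpace ℝ (Fin n)) j = -a i := by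
  simp [EuclideanSpace.single_apply]

lemma coord_le_dist {n : ℕ} (a b : EuclideanSpace ℝ (Fin n)) (i : Fin n) :
    |a i - b i| ≤ dist a b := by
  rw [EuclideanSpace.dist_eq]
  rw [← Real.sqrt_sq (abs_nonneg (a i - b i))]
  apply Real.sqrt_le_sqrt
  rw [sq_abs]
  exact Finset.single_le_sum (f := fun j => dist (a j) (b j) ^ 2)
    (fun j _ => by positivity) (Finset.mem_univ i) |>.trans_eq' (by rw [Real.dist_eq, sq_abs])

lemma norm_le_of_coord {n : ℕ} (a : EuclideanSpace ℝ (Fin n)) (B : Fin n → ℝ)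
    (hB : ∀ i, |a i| ≤ B i) : ‖a‖ ≤ Real.sqrt (∑ i, B i ^ 2) := by
  rw [EuclideanSpace.norm_eq]
  apply Real.sqrt_le_sqrt
  apply Finset.sum_le_sum
  intro i _
  rw [Real.norm_eq_abs]
  exact pow_le_pow_left₀ (abs_nonneg _) (hB i) 2

/-- If `E` is a Dedekind complete vector lattice, `E₀` is a vector
sublattice of `E` which is itself Dedekind complete, `f₁,…,fₙ ∈ E₀`, and
`φ : ℝⁿ → ℝ` is sublinear, then the supremum of `{ Σ aᵢ fᵢ : a ∈ ∂φ(0) }`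
computed in `E₀` equals the supremum of the same set computed in `E`. -/
theorem stmt5 {n : ℕ} {E : Type*} [Lattice E] [AddCommGroup E] [Module ℝ E]
    [CovariantClass E E (· + ·) (· ≤ ·)] [PosSMulMono ℝ E]
    (hDC : ∀ S : Set E, S.Nonempty → BddAbove S → ∃ s, IsLUB S s)
    (E₀ : Submodule ℝ E)
    (hsup : ∀ x y : E, x ∈ E₀ → y ∈ E₀ → x ⊔ y ∈ E₀)
    (hinf : ∀ x y : E, x ∈ E₀ → y ∈ E₀ → x ⊓ y ∈ E₀)
    (hDC₀ : ∀ S : Set E, S.Nonempty → S ⊆ (E₀ : Set E) →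
      (∃ b ∈ E₀, b ∈ upperBounds S) → ∃ s, IsLUBIn (E₀ : Set E) S s)
    (f : Fin n → E) (hf : ∀ i, f i ∈ E₀)
    (φ : EuclideanSpace ℝ (Fin n) → ℝ) (hφ : Sublinear φ) :
    ∃ s, IsLUBIn (E₀ : Set E) {x : E | ∃ a ∈ subdiff φ, x = ∑ i, a i • f i} s ∧
      IsLUB {x : E | ∃ a ∈ subdiff φ, x = ∑ i, a i • f i} s := by
  classical
  obtain ⟨hadd, hsmul⟩ := hφ
  have hφ0 : φ 0 = 0 := by simpa using hsmul 0 le_rfl 0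
  set S : Set E := {x : E | ∃ a ∈ subdiff φ, x = ∑ i, a i • f i} with hSdef
  -- the subdifferential is nonempty (Hahn–Banach)
  obtain ⟨g, -, hg⟩ :=
    exists_extension_of_le_sublinear ⟨⊥, 0⟩ φ (fun c hc x => hsmul c hc.le x) hadd
      (fun x => by
        obtain ⟨x, hx⟩ := x
        simp only [Submodule.mem_bot] at hx
        simp [hx, hφ0])
  set a₀ : EuclideanSpace ℝ (Fin n) := WithLp.toLp 2 (fun i => g (EuclideanSpace.single i 1)) with ha₀def
  have ha₀ : a₀ ∈ subdiff φ := by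
    intro x
    have h1 : ∑ i, a₀ i * x i = g x := by
      rw [glin g x]
      exact Finset.sum_congr rfl fun i _ => mul_comm _ _
    rw [h1]; exact hg x
  -- basic membership facts
  have hSE₀ : S ⊆ (E₀ : Set E) := by
    rintro x ⟨a, -, rfl⟩
    exact Submodule.sum_mem _ fun i _ => Submodule.smul_mem _ _ (hf i)
  have hSne : S.Nonempty := ⟨∑ i, a₀ i • f i, a₀, ha₀, rfl⟩
  -- the positive elements F i = |f i|
  set F : Fin n → E := fun i => f i ⊔ (-f i) with hFdef
  have hFle : ∀ i, f i ≤ F i := fun i => le_sup_left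
  have hFnegle : ∀ i, -f i ≤ F i := fun i => le_sup_right
  have hF0 : ∀ i, 0 ≤ F i := by
    intro i
    have h1 : f i + (-f i) ≤ F i + F i := add_le_add (hFle i) (hFnegle i)
    rw [add_neg_cancel] at h1
    have h2 : (0:E) ≤ (2:ℝ) • F i := by rwa [two_smul]
    have h3 := aux_smul_nonneg (by norm_num : (0:ℝ) ≤ 1/2) h2
    rw [smul_smul] at h3
    norm_num at h3
    exact h3
  have hFmem : ∀ i, F i ∈ E₀ := fun i => hsup _ _ (hf i) (Submodule.neg_mem _ (hf i))
  set h : E := ∑ i, F i with hhdef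
  have hhmem : h ∈ E₀ := Submodule.sum_mem _ fun i _ => hFmem i
  -- coordinate bounds on the subdifferential
  set B : Fin n → ℝ := fun i =>
    |φ (EuclideanSpace.single i 1)| + |φ (-(EuclideanSpace.single i 1))| with hBdef
  have hB : ∀ a ∈ subdiff φ, ∀ i, |a i| ≤ B i := by
    intro a ha i
    have h1 : a i ≤ φ (EuclideanSpace.single i 1) := by
      have := ha (EuclideanSpace.single i 1); rwa [sum_single] at this
    have h2 : -a i ≤ φ (-(EuclideanSpace.single i 1)) := by
      have := ha (-(EuclideanSpace.single i 1)); rwa [sum_single_neg] at this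
    have h3 := le_abs_self (φ (EuclideanSpace.single i 1))
    have h4 := le_abs_self (φ (-(EuclideanSpace.single i 1)))
    have h5 := abs_nonneg (φ (EuclideanSpace.single i 1))
    have h6 := abs_nonneg (φ (-(EuclideanSpace.single i 1)))
    simp only [hBdef]
    rw [abs_le]; constructor <;> [linarith; linarith]
  -- an upper bound of S inside E₀
  have hubS : ∀ a ∈ subdiff φ, ∑ i, a i • f i ≤ ∑ i, B i • F i := by
    intro a ha
    exact aux_sum_le _ _ _ fun i _ =>
      aux_smul_le (hFle i) (hFnegle i) (hF0 i) (hB a ha i)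
  have hb₀mem : (∑ i, B i • F i) ∈ E₀ :=
    Submodule.sum_mem _ fun i _ => Submodule.smul_mem _ _ (hFmem i)
  have hb₀ub : (∑ i, B i • F i) ∈ upperBounds S := by
    rintro x ⟨a, ha, rfl⟩; exact hubS a ha
  obtain ⟨s, hsmem, hsub, hsleast⟩ := hDC₀ S hSne hSE₀ ⟨_, hb₀mem, hb₀ub⟩
  -- key: s is below every upper bound in E
  have hkey : ∀ u ∈ upperBounds S, s ≤ u := by
    intro u hu
    have hεbound : ∀ ε : ℝ, 0 < ε → s - u ≤ ε • h := by
      intro ε hε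
      -- finite ε-net of the subdifferential
      set R : ℝ := Real.sqrt (∑ i, B i ^ 2) with hRdef
      have hCb : subdiff φ ⊆ Metric.closedBall 0 R := by
        intro a ha
        rw [Metric.mem_closedBall, dist_zero_right]
        exact norm_le_of_coord a B (hB a ha)
      have htb : TotallyBounded (subdiff φ) :=
        (isCompact_closedBall (0 : EuclideanSpace ℝ (Fin n)) R).totallyBounded.subset hCb
      obtain ⟨t, htC, htfin, htcover⟩ :=
        totallyBounded_iff_subset.mp htb _ (Metric.dist_mem_uniformity hε)
      -- the net is nonempty
      have htne : (htfin.toFinset : Finset (EuclideanSpace ℝ (Fin n))).Nonempty := by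
        obtain ⟨b, hb, -⟩ := Set.mem_iUnion₂.mp (htcover ha₀)
        exact ⟨b, htfin.mem_toFinset.mpr hb⟩
      set G : E := htfin.toFinset.sup' htne (fun b => ∑ i, b i • f i) with hGdef
      have hGmem : G ∈ E₀ := by
        apply Finset.sup'_induction
        · intro x hx y hy; exact hsup x y hx hy
        · intro b _
          exact Submodule.sum_mem _ fun i _ => Submodule.smul_mem _ _ (hf i)
      have hGle : G ≤ u := by
        apply Finset.sup'_le
        intro b hb
        exact hu ⟨b, htC (htfin.mem_toFinset.mp hb), rfl⟩
      have hGub : ∀ a ∈ subdiff φ, ∑ i, a i • f i ≤ G + ε • h := by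
        intro a ha
        obtain ⟨b, hb, hab⟩ := Set.mem_iUnion₂.mp (htcover ha)
        have hdist : dist a b < ε := hab
        have hcoord : ∀ i, |a i - b i| ≤ ε := fun i =>
          (coord_le_dist a b i).trans hdist.le
        have h1 : ∑ i, a i • f i - ∑ i, b i • f i = ∑ i, (a i - b i) • f i := by
          rw [← Finset.sum_sub_distrib]
          exact Finset.sum_congr rfl fun i _ => (sub_smul _ _ _).symm
        have h2 : ∑ i, (a i - b i) • f i ≤ ε • h := by
          rw [hhdef, Finset.smul_sum]
          exact aux_sum_le _ _ _ fun i _ =>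
            aux_smul_le (hFle i) (hFnegle i) (hF0 i) (hcoord i)
        have h3 : ∑ i, b i • f i ≤ G :=
          Finset.le_sup' (fun b => ∑ i, b i • f i) (htfin.mem_toFinset.mpr hb)
        have h4 : ∑ i, a i • f i ≤ ∑ i, b i • f i + ε • h := by
          rw [← sub_le_iff_le_add']
          calc ∑ i, a i • f i - ∑ i, b i • f i = ∑ i, (a i - b i) • f i := h1
            _ ≤ ε • h := h2
        calc ∑ i, a i • f i ≤ ∑ i, b i • f i + ε • h := h4
          _ ≤ G + ε • h := add_le_add_left h3 _
      have hGub' : G + ε • h ∈ upperBounds S := by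
        rintro x ⟨a, ha, rfl⟩; exact hGub a ha
      have hGmem' : G + ε • h ∈ E₀ :=
        Submodule.add_mem _ hGmem (Submodule.smul_mem _ _ hhmem)
      have h5 : s ≤ G + ε • h := hsleast _ hGmem' hGub'
      have h6 : s ≤ u + ε • h := h5.trans (add_le_add_left hGle _)
      rwa [sub_le_iff_le_add']
    have hh0 : (0:E) ≤ h := aux_sum_nonneg _ _ fun i _ => hF0 i
    have := aux_arch hDC hεbound
    exact sub_nonpos.mp this
  exact ⟨s, ⟨hsmem, hsub, hsleast⟩, hsub, fun u hu => hkey u hu⟩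
end

section
/- Let n ∈ ℕ, let h: ℝ^n → ℝ be a positively homogeneous function that is bounded on the unit sphere, let Φ be a nonempty family of sublinear maps ℝ^n → ℝ with h(x) = inf_{φ ∈ Φ} φ(x) for all x ∈ ℝ^n, let E be a Dedekind complete vector lattice, and let f_1,…,f_n ∈ E. Then the infimum of the set { sup_{a ∈ ∂φ(0)} Σ_{i=1}^n a_i f_i : φ ∈ Φ } exists in E (each inner supremum exists in E since E is Dedekind complete). -/
open scoped BigOperators Pointwise

section Latt
variable {E : Type*} [Lattice E] [AddCommGroup E] [Module ℝ E]
  [CovariantClass E E (· + ·) (· ≤ ·)] [PosSMulMono ℝ E]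

lemma smul_mono_scalar {r s : ℝ} (hrs : r ≤ s) {v : E} (hv : 0 ≤ v) : r • v ≤ s • v := by
  have h0 : (0:E) ≤ (s - r) • v := by
    have := smul_le_smul_of_nonneg_left hv (sub_nonneg.2 hrs)
    simpa using this
  have h1 : r • v + 0 ≤ r • v + (s - r) • v := add_le_add le_rfl h0
  have h2 : r • v + (s - r) • v = s • v := by
    rw [← add_smul]; ring_nf
  simpa [h2] using h1

lemma smul_le_abs_smul_abs (r : ℝ) (v : E) : r • v ≤ |r| • |v| := by
  rcases le_total 0 r with hr | hr
  · calc r • v ≤ r • |v| := smul_le_smul_of_nonneg_left (le_abs_self v) hr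
      _ ≤ |r| • |v| := smul_mono_scalar (le_abs_self r) (abs_nonneg v)
  · have h1 : r • v = (-r) • (-v) := by simp
    rw [h1]
    calc (-r) • (-v) ≤ (-r) • |v| := smul_le_smul_of_nonneg_left (neg_le_abs v) (by linarith)
      _ ≤ |r| • |v| := smul_mono_scalar (neg_le_abs r) (abs_nonneg v)

lemma smul_le_of_abs_le {r s : ℝ} (hrs : |r| ≤ s) (v : E) : r • v ≤ s • |v| :=
  (smul_le_abs_smul_abs r v).trans (smul_mono_scalar hrs (abs_nonneg v))

lemma neg_smul_abs_le {r s : ℝ} (hrs : |r| ≤ s) (v : E) : -(s • |v|) ≤ r • v := by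
  have := smul_le_of_abs_le (r := -r) (by simpa using hrs) v
  rw [neg_smul] at this
  exact neg_le.1 this
lemma sum_le_sum_E {ι : Type*} (s : Finset ι) {g₁ g₂ : ι → E} (h : ∀ i ∈ s, g₁ i ≤ g₂ i) :
    ∑ i ∈ s, g₁ i ≤ ∑ i ∈ s, g₂ i := by
  classical
  induction s using Finset.cons_induction with
  | empty => simp
  | cons a s ha ih =>
    rw [Finset.sum_cons, Finset.sum_cons]
    calc g₁ a + ∑ i ∈ s, g₁ i ≤ g₁ a + ∑ i ∈ s, g₂ i :=
          add_le_add le_rfl (ih fun i hi => h i (Finset.mem_cons_of_mem hi))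
      _ ≤ g₂ a + ∑ i ∈ s, g₂ i := by
          rw [add_comm, add_comm (g₂ a)]
          exact add_le_add le_rfl (h a (Finset.mem_cons_self a s))

end Latt

lemma euclid_sum_single {n : ℕ} (x : EuclideanSpace ℝ (Fin n)) :
    ∑ i, x i • EuclideanSpace.single i (1:ℝ) = x := by
  ext j
  rw [show (∑ i, x i • EuclideanSpace.single i (1:ℝ)) j
      = ∑ i, (x i • EuclideanSpace.single i (1:ℝ)) j by rw [WithLp.ofLp_sum, Finset.sum_apply]]
  simp [EuclideanSpace.single_apply, mul_ite, Finset.sum_ite_eq]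

lemma sum_mul_single {n : ℕ} (a : EuclideanSpace ℝ (Fin n)) (i : Fin n) :
    ∑ j, a j * (EuclideanSpace.single i (1:ℝ)) j = a i := by
  simp [EuclideanSpace.single_apply, mul_ite, Finset.sum_ite_eq']


lemma sublinear_zero {n : ℕ} {φ : EuclideanSpace ℝ (Fin n) → ℝ} (hφ : Sublinear φ) : φ 0 = 0 := by
  have := hφ.2 0 le_rfl 0
  simpa using this

/-- Any sublinear map has a subgradient at 0 (with a linear-functional bound). -/
lemma exists_subgradient_le {n : ℕ} {ψ : EuclideanSpace ℝ (Fin n) → ℝ}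
    (hadd : ∀ x y, ψ (x + y) ≤ ψ x + ψ y)
    (hhom : ∀ c : ℝ, 0 < c → ∀ x, ψ (c • x) = c * ψ x)
    (h0 : 0 ≤ ψ 0) :
    ∃ a : EuclideanSpace ℝ (Fin n), ∀ x, ∑ i, a i * x i ≤ ψ x := by
  obtain ⟨g, -, hg⟩ := exists_extension_of_le_sublinear
    ((0 : EuclideanSpace ℝ (Fin n) →ₗ[ℝ] ℝ).toPMap ⊥) ψ hhom hadd
    (by
      rintro ⟨x, hx⟩
      have hx0 : x = 0 := by simpa [Submodule.mem_bot] using hx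
      simp [LinearMap.toPMap, hx0, h0])
  refine ⟨WithLp.toLp 2 (fun i => g (EuclideanSpace.single i 1)), fun x => ?_⟩
  have : ∑ i, g (EuclideanSpace.single i (1:ℝ)) * x i = g x := by
    conv_rhs => rw [← euclid_sum_single x]
    rw [map_sum]
    exact Finset.sum_congr rfl fun i _ => by rw [map_smul, smul_eq_mul, mul_comm]
  show ∑ i, g (EuclideanSpace.single i (1:ℝ)) * x i ≤ ψ x
  rw [this]; exact hg x

lemma exists_small_subgradient {n : ℕ} {φ : EuclideanSpace ℝ (Fin n) → ℝ} (hφ : Sublinear φ)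
    {C : ℝ} (hC : 0 ≤ C) (hlow : ∀ x, -(C * ‖x‖) ≤ φ x) :
    ∃ a ∈ subdiff φ, ∀ x : EuclideanSpace ℝ (Fin n), ∑ i, a i * x i ≤ C * ‖x‖ := by
  set S : EuclideanSpace ℝ (Fin n) → Set ℝ :=
    fun x => Set.range (fun y => φ y + C * ‖x - y‖) with hS
  have hSne : ∀ x, (S x).Nonempty := by
    intro x
    exact ⟨φ 0 + C * ‖x - 0‖, ⟨0, rfl⟩⟩
  have hSbdd : ∀ x, ∀ z ∈ S x, -(C * ‖x‖) ≤ z := by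
    rintro x z ⟨y, rfl⟩
    dsimp only
    have h1 : -(C * ‖y‖) ≤ φ y := hlow y
    have h2 : ‖y‖ ≤ ‖x‖ + ‖x - y‖ := by
      have hxy : x - (x - y) = y := by abel
      calc ‖y‖ = ‖x - (x - y)‖ := by rw [hxy]
        _ ≤ ‖x‖ + ‖x - y‖ := norm_sub_le _ _
    nlinarith [norm_nonneg (x - y), norm_nonneg y]
  have hSbdd' : ∀ x, BddBelow (S x) := fun x => ⟨_, hSbdd x⟩
  set ψ : EuclideanSpace ℝ (Fin n) → ℝ := fun x => sInf (S x) with hψ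
  have hψ_le : ∀ x y, ψ x ≤ φ y + C * ‖x - y‖ := fun x y =>
    csInf_le (hSbdd' x) ⟨y, rfl⟩
  have hψ_le_φ : ∀ x, ψ x ≤ φ x := fun x => by
    have := hψ_le x x; simpa using this
  have hψ_le_norm : ∀ x, ψ x ≤ C * ‖x‖ := fun x => by
    have := hψ_le x 0; simpa [sublinear_zero hφ] using this
  have hψ_lb : ∀ x, -(C * ‖x‖) ≤ ψ x := fun x => le_csInf (hSne x) (hSbdd x)
  have hadd : ∀ x₁ x₂, ψ (x₁ + x₂) ≤ ψ x₁ + ψ x₂ := by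
    intro x₁ x₂
    have key : ∀ a ∈ S x₁, ∀ b ∈ S x₂, ψ (x₁ + x₂) ≤ a + b := by
      rintro a ⟨y₁, rfl⟩ b ⟨y₂, rfl⟩
      dsimp only
      have h1 : ψ (x₁ + x₂) ≤ φ (y₁ + y₂) + C * ‖x₁ + x₂ - (y₁ + y₂)‖ := hψ_le _ _
      have h2 : φ (y₁ + y₂) ≤ φ y₁ + φ y₂ := hφ.1 _ _
      have h3 : ‖x₁ + x₂ - (y₁ + y₂)‖ ≤ ‖x₁ - y₁‖ + ‖x₂ - y₂‖ := by
        have hxy : (x₁ - y₁) + (x₂ - y₂) = x₁ + x₂ - (y₁ + y₂) := by abel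
        calc ‖x₁ + x₂ - (y₁ + y₂)‖ = ‖(x₁ - y₁) + (x₂ - y₂)‖ := by rw [hxy]
          _ ≤ ‖x₁ - y₁‖ + ‖x₂ - y₂‖ := norm_add_le _ _
      nlinarith
    have step : ∀ a ∈ S x₁, ψ (x₁ + x₂) - a ≤ ψ x₂ := by
      intro a ha
      exact le_csInf (hSne x₂) (fun b hb => by linarith [key a ha b hb])
    have : ψ (x₁ + x₂) - ψ x₂ ≤ ψ x₁ :=
      le_csInf (hSne x₁) (fun a ha => by linarith [step a ha])
    linarith
  have hhom : ∀ c : ℝ, 0 < c → ∀ x, ψ (c • x) = c * ψ x := by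
    intro c hc x
    have himg : S (c • x) = (fun z => c * z) '' S x := by
      ext z
      constructor
      · rintro ⟨y, rfl⟩
        refine ⟨φ (c⁻¹ • y) + C * ‖x - c⁻¹ • y‖, ⟨c⁻¹ • y, rfl⟩, ?_⟩
        have hy : c • (c⁻¹ • y) = y := by
          rw [smul_smul, mul_inv_cancel₀ hc.ne', one_smul]
        have hnorm : ‖c • x - y‖ = c * ‖x - c⁻¹ • y‖ := by
          rw [show c • x - y = c • (x - c⁻¹ • y) by rw [smul_sub, hy], norm_smul,
            Real.norm_eq_abs, abs_of_pos hc]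
        dsimp only
        rw [hnorm, mul_add, ← hφ.2 c hc.le, hy]
        ring
      · rintro ⟨-, ⟨y, rfl⟩, rfl⟩
        refine ⟨c • y, ?_⟩
        dsimp only
        have hnorm : ‖c • x - c • y‖ = c * ‖x - y‖ := by
          rw [show c • x - c • y = c • (x - y) by rw [smul_sub], norm_smul,
            Real.norm_eq_abs, abs_of_pos hc]
        rw [hφ.2 c hc.le, hnorm]
        ring
    have hconv : (fun z => c * z) '' S x = c • S x := by
      ext z; simp [Set.mem_smul_set, smul_eq_mul, eq_comm]
    show sInf (S (c • x)) = c * sInf (S x)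
    rw [himg, hconv]
    simpa [smul_eq_mul] using Real.sInf_smul_of_nonneg hc.le (S x)
  obtain ⟨a, ha⟩ := exists_subgradient_le hadd hhom (by simpa using hψ_lb 0)
  exact ⟨a, fun x => (ha x).trans (hψ_le_φ x), fun x => (ha x).trans (hψ_le_norm x)⟩

lemma sum_mul_neg_single {n : ℕ} (a : EuclideanSpace ℝ (Fin n)) (i : Fin n) :
    ∑ j, a j * (-(EuclideanSpace.single i (1:ℝ))) j = -(a i) := by
  simp [EuclideanSpace.single_apply, mul_ite, Finset.sum_ite_eq']

/-- Let `h : ℝⁿ → ℝ` be positively homogeneous and bounded on the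
unit sphere, `Φ` a nonempty family of sublinear maps with
`h(x) = inf_{φ ∈ Φ} φ(x)` for all `x`, `E` a Dedekind complete vector lattice
and `f₁,…,fₙ ∈ E`.  Then the infimum of
`{ sup_{a ∈ ∂φ(0)} Σ aᵢ fᵢ : φ ∈ Φ }` exists in `E` (the inner suprema exist in
`E` since `E` is Dedekind complete). -/
theorem stmt10 {n : ℕ} {E : Type*} [Lattice E] [AddCommGroup E] [Module ℝ E]
    [CovariantClass E E (· + ·) (· ≤ ·)] [PosSMulMono ℝ E]
    (hDCsup : ∀ S : Set E, S.Nonempty → BddAbove S → ∃ s, IsLUB S s)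
    (hDCinf : ∀ S : Set E, S.Nonempty → BddBelow S → ∃ s, IsGLB S s)
    (h : EuclideanSpace ℝ (Fin n) → ℝ)
    (hph : ∀ c : ℝ, 0 ≤ c → ∀ x, h (c • x) = c * h x)
    (hbdd : ∃ m M : ℝ, ∀ x : EuclideanSpace ℝ (Fin n), ‖x‖ = 1 → m ≤ h x ∧ h x ≤ M)
    (Φ : Set (EuclideanSpace ℝ (Fin n) → ℝ)) (hΦne : Φ.Nonempty)
    (hΦ : ∀ φ ∈ Φ, Sublinear φ)
    (hrep : ∀ x, IsGLB {y : ℝ | ∃ φ ∈ Φ, y = φ x} (h x))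
    (f : Fin n → E) :
    ∃ g, IsGLB {s : E | ∃ φ ∈ Φ,
      IsLUB {x : E | ∃ a ∈ subdiff φ, x = ∑ i, a i • f i} s} g := by
  classical
  obtain ⟨m, M, hmM⟩ := hbdd
  set C : ℝ := max (-m) 0 with hCdef
  have hC0 : (0:ℝ) ≤ C := le_max_right _ _
  have hlow_h : ∀ x, -(C * ‖x‖) ≤ h x := by
    intro x
    rcases eq_or_ne x 0 with rfl | hx
    · have h0 : h 0 = 0 := by simpa using hph 0 le_rfl 0
      simp [h0]
    · have hxn : (0:ℝ) < ‖x‖ := norm_pos_iff.2 hx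
      set u := ‖x‖⁻¹ • x with hu_def
      have hu : ‖u‖ = 1 := by
        rw [hu_def, norm_smul, Real.norm_eq_abs, abs_of_pos (inv_pos.2 hxn),
          inv_mul_cancel₀ hxn.ne']
      have hxu : h x = ‖x‖ * h u := by
        have hsx : ‖x‖ • u = x := by
          rw [hu_def, smul_smul, mul_inv_cancel₀ hxn.ne', one_smul]
        rw [← hsx, hph ‖x‖ hxn.le, hsx]
      have hm := (hmM u hu).1
      have hCm : -C ≤ m := by
        have : -m ≤ C := le_max_left _ _
        linarith
      rw [hxu]
      nlinarith
  have hlow : ∀ φ ∈ Φ, ∀ x, -(C * ‖x‖) ≤ φ x := by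
    intro φ hφm x
    exact (hlow_h x).trans ((hrep x).1 ⟨φ, hφm, rfl⟩)
  have hsmall : ∀ φ ∈ Φ, ∃ a ∈ subdiff φ, ∀ i, |a i| ≤ C := by
    intro φ hφm
    obtain ⟨a, ha, hab⟩ := exists_small_subgradient (hΦ φ hφm) hC0 (hlow φ hφm)
    refine ⟨a, ha, fun i => ?_⟩
    have h1 : a i ≤ C := by
      have := hab (EuclideanSpace.single i 1)
      rw [sum_mul_single] at this
      simpa [EuclideanSpace.norm_single] using this
    have h2 : -(a i) ≤ C := by
      have := hab (-(EuclideanSpace.single i 1))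
      rw [sum_mul_neg_single] at this
      simpa [EuclideanSpace.norm_single] using this
    exact abs_le.2 ⟨by linarith, h1⟩
  have hcoord : ∀ (φ : EuclideanSpace ℝ (Fin n) → ℝ), ∀ a ∈ subdiff φ, ∀ i,
      |a i| ≤ max (φ (EuclideanSpace.single i 1)) (φ (-(EuclideanSpace.single i 1))) := by
    intro φ a ha i
    have h1 : a i ≤ φ (EuclideanSpace.single i 1) := by
      have := ha (EuclideanSpace.single i 1)
      rwa [sum_mul_single] at this
    have h2 : -(a i) ≤ φ (-(EuclideanSpace.single i 1)) := by
      have := ha (-(EuclideanSpace.single i 1))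
      rwa [sum_mul_neg_single] at this
    exact abs_le.2 ⟨by
      have := le_max_right (φ (EuclideanSpace.single i 1)) (φ (-(EuclideanSpace.single i 1)))
      linarith, h1.trans (le_max_left _ _)⟩
  have inner : ∀ φ ∈ Φ, ∃ s, IsLUB {x : E | ∃ a ∈ subdiff φ, x = ∑ i, a i • f i} s := by
    intro φ hφm
    apply hDCsup
    · obtain ⟨a, ha, -⟩ := hsmall φ hφm
      exact ⟨_, a, ha, rfl⟩
    · refine ⟨∑ i, (max (φ (EuclideanSpace.single i 1)) (φ (-(EuclideanSpace.single i 1)))) • |f i|, ?_⟩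
      rintro x ⟨a, ha, rfl⟩
      exact sum_le_sum_E _ fun i _ => smul_le_of_abs_le (hcoord φ a ha i) (f i)
  apply hDCinf
  · obtain ⟨φ₀, hφ₀⟩ := hΦne
    obtain ⟨s, hs⟩ := inner φ₀ hφ₀
    exact ⟨s, φ₀, hφ₀, hs⟩
  · refine ⟨∑ i, (-C) • |f i|, ?_⟩
    rintro s ⟨φ, hφm, hs⟩
    obtain ⟨a, ha, hab⟩ := hsmall φ hφm
    have h1 : ∑ i, (-C) • |f i| ≤ ∑ i, a i • f i := by
      refine sum_le_sum_E _ fun i _ => ?_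
      have := neg_smul_abs_le (hab i) (f i)
      rwa [← neg_smul] at this
    exact h1.trans (hs.1 ⟨a, ha, rfl⟩)
end
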